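/- arXiv:1204.4298 — 7 statements merged into one kernel-verified Lean document; each statement's English description precedes it below -/
import Mathlib

section
/- If G is a connected graph, then rc(G) ≤ 2χ(Ḡ) − 1, where Ḡ is the complement of G and χ(Ḡ) is its chromatic number. -/
open SimpleGraph

/-- A coloring `c` of the (potential) edges of `G` with `k` colors makes `G`
rainbow connected if any two vertices are joined by a path whose edges
receive pairwise distinct colors. -/
def RainbowConnectedWith {V : Type*} (G : SimpleGraph V) {k : ℕ}
    (c : Sym2 V → Fin k) : Prop :=
  ∀ u v : V, ∃ p : G.Walk u v, p.IsPath ∧ (p.edges.map c).Nodup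

/-- The rainbow connection number: the least number of colors making `G`
rainbow connected. -/
noncomputable def rc {V : Type*} (G : SimpleGraph V) : ℕ :=
  sInf {k | ∃ c : Sym2 V → Fin k, RainbowConnectedWith G c}

/-- The independence number: the largest cardinality of a set of pairwise
non-adjacent vertices. -/
noncomputable def indepNum {V : Type*} (G : SimpleGraph V) : ℕ :=
  sSup {n | ∃ s : Finset V, s.card = n ∧ (↑s : Set V).Pairwise fun a b => ¬ G.Adj a b}

/-!
Cover `V` by `χ(Ḡ)` cliques of `G`, the colour classes of `Ḡ`, and induct on the number of
cliques. Contracting every clique gives a connected graph, which has a vertex whose removal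
leaves it connected; hence some clique `K` can be deleted from `G` so that the rest stays
connected, and by induction it is rainbow connected with `2χ(Ḡ) − 3` colours. Two new colours,
one for the edges inside `K` and one for the edges leaving `K`, suffice for `G`: a vertex of `K`
reaches a vertex outside `K` by at most one edge inside `K`, one edge leaving `K`, and then a
rainbow walk avoiding `K`.
-/

namespace SimpleGraph

variable {V W ι α β : Type*} {G : SimpleGraph V}

/-- Walks suffice in place of paths: bypassing a rainbow walk gives a rainbow path. -/
def RainbowWalkConnectedWith (G : SimpleGraph V) (c : Sym2 V → α) : Prop :=
  ∀ u v : V, ∃ p : G.Walk u v, (p.edges.map c).Nodup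

theorem RainbowWalkConnectedWith.comp {c : Sym2 V → α} (hc : G.RainbowWalkConnectedWith c)
    {e : α → β} (he : e.Injective) : G.RainbowWalkConnectedWith (e ∘ c) := by
  intro u v
  obtain ⟨p, hp⟩ := hc u v
  exact ⟨p, by simpa only [List.map_map] using hp.map he⟩

theorem RainbowWalkConnectedWith.rainbowConnectedWith {k : ℕ} {c : Sym2 V → Fin k}
    (hc : G.RainbowWalkConnectedWith c) : RainbowConnectedWith G c := by
  classical
  intro u v
  obtain ⟨p, hp⟩ := hc u v
  refine ⟨p.bypass, p.bypass_isPath, p.bypass_isPath.isTrail.edges_nodup.map_on ?_⟩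
  intro x hx y hy
  exact List.inj_on_of_nodup_map hp (p.edges_bypass_subset_edges hx)
    (p.edges_bypass_subset_edges hy)

theorem RainbowWalkConnectedWith.rc_le {k : ℕ} {c : Sym2 V → Fin k}
    (hc : G.RainbowWalkConnectedWith c) : rc G ≤ k :=
  Nat.sInf_le ⟨c, hc.rainbowConnectedWith⟩

theorem exists_walk_nodup_map_edges_of_adj {u v : V} (h : u ≠ v → G.Adj u v) (c : Sym2 V → α) :
    ∃ p : G.Walk u v, (p.edges.map c).Nodup := by
  by_cases huv : u = v
  · subst huv
    exact ⟨.nil, by simp⟩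
  · exact ⟨(h huv).toWalk, by simp [Adj.toWalk]⟩

open Classical in
/-- Edges of `G.induce Kᶜ` keep their colour under `c`; the other edges are coloured `inr true`
if they lie inside `K` and `inr false` if they leave `K`. -/
noncomputable def extendAcross (K : Set V) (c : Sym2 ↥Kᶜ → α) : Sym2 V → α ⊕ Bool :=
  Function.extend (Sym2.map (↑)) (Sum.inl ∘ c) fun e => .inr (decide (e ∈ K.sym2))

theorem extendAcross_comp_map_val (K : Set V) (c : Sym2 ↥Kᶜ → α) :
    extendAcross K c ∘ Sym2.map (↑) = Sum.inl ∘ c :=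
  Function.extend_comp (Sym2.map.injective Subtype.val_injective) _ _

open Classical in
theorem extendAcross_mk_of_mem {K : Set V} (c : Sym2 ↥Kᶜ → α) {x : V} (hx : x ∈ K) (y : V) :
    extendAcross K c s(x, y) = .inr (decide (y ∈ K)) := by
  rw [extendAcross, Function.extend_apply']
  · simp [hx]
  · rintro ⟨e, he⟩
    have hxe : x ∈ e.map (↑) := he ▸ Sym2.mem_mk_left x y
    obtain ⟨z, -, rfl⟩ := Sym2.mem_map.mp hxe
    exact z.2 hx

theorem RainbowWalkConnectedWith.exists_walk_extendAcross {K : Set V} {c : Sym2 ↥Kᶜ → α}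
    (hc : (G.induce Kᶜ).RainbowWalkConnectedWith c) (a b : ↥Kᶜ) :
    ∃ p : G.Walk a b, ∃ l : List α, l.Nodup ∧ p.edges.map (extendAcross K c) = l.map .inl := by
  obtain ⟨p, hp⟩ := hc a b
  refine ⟨p.map (Embedding.induce Kᶜ).toHom, _, hp, (congrArg _ (p.edges_map _)).trans ?_⟩
  rw [List.map_map, List.map_map]
  exact congrArg (List.map · p.edges) (extendAcross_comp_map_val K c)

theorem RainbowWalkConnectedWith.extendAcross {K : Set V} {c : Sym2 ↥Kᶜ → α}
    (hc : (G.induce Kᶜ).RainbowWalkConnectedWith c) (hG : G.Preconnected) (hK : G.IsClique K) :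
    G.RainbowWalkConnectedWith (extendAcross K c) := by
  have leave : ∀ u v, u ∈ K → v ∉ K →
      ∃ p : G.Walk u v, (p.edges.map (SimpleGraph.extendAcross K c)).Nodup := by
    intro u v hu hv
    obtain ⟨⟨⟨x, y⟩, hxy⟩, -, hx, hy⟩ := (hG u v).some.exists_boundary_dart K hu hv
    obtain ⟨q, l, hl, hq⟩ := hc.exists_walk_extendAcross ⟨y, hy⟩ ⟨v, hv⟩
    by_cases hux : u = x
    · subst hux
      exact ⟨.cons hxy q, by simp [extendAcross_mk_of_mem c hu, hy, hq, hl.map Sum.inl_injective]⟩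
    · refine ⟨.cons (hK hu hx hux) (.cons hxy q), ?_⟩
      simp [extendAcross_mk_of_mem c hu, extendAcross_mk_of_mem c hx, hx, hy, hq,
        hl.map Sum.inl_injective]
  intro u v
  by_cases hu : u ∈ K <;> by_cases hv : v ∈ K
  · exact exists_walk_nodup_map_edges_of_adj (hK hu hv) _
  · exact leave u v hu hv
  · obtain ⟨p, hp⟩ := leave v u hv hu
    exact ⟨p.reverse, by simpa using hp⟩
  · obtain ⟨p, l, hl, hp⟩ := hc.exists_walk_extendAcross ⟨u, hu⟩ ⟨v, hv⟩
    exact ⟨p, hp ▸ hl.map Sum.inl_injective⟩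

theorem Reachable.to_map (f : V → W) {u v : V} (h : G.Reachable u v) :
    (G.map f).Reachable (f u) (f v) := by
  obtain ⟨p⟩ := h
  induction p with
  | nil => rfl
  | @cons x y _ hxy _ ih =>
    refine .trans ?_ ih
    by_cases hf : f x = f y
    · rw [hf]
    · exact (map_adj_apply' hxy hf).reachable

theorem Preconnected.map_of_surjective (hG : G.Preconnected) {f : V → W} (hf : f.Surjective) :
    (G.map f).Preconnected := by
  intro i j
  obtain ⟨u, rfl⟩ := hf i
  obtain ⟨v, rfl⟩ := hf j
  exact (hG u v).to_map f

theorem Preconnected.of_map {f : V → W} (hf : ∀ u v, f u = f v → G.Reachable u v)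
    (h : (G.map f).Preconnected) : G.Preconnected := by
  suffices lift : ∀ {i j} (p : (G.map f).Walk i j) (u v), f u = i → f v = j → G.Reachable u v from
    fun u v => (h (f u) (f v)).elim fun p => lift p u v rfl rfl
  intro i j p
  induction p with
  | nil => exact fun u v hu hv => hf u v (hu.trans hv.symm)
  | cons hadj _ ih =>
    obtain ⟨-, x, y, hxy, hx, hy⟩ := hadj
    exact fun u v hu hv => (hf u x (hu.trans hx.symm)).trans (hxy.reachable.trans (ih y v hy hv))

theorem induce_map_le_map_induce_preimage (f : V → W) (t : Set W) :
    (G.map f).induce t ≤ (G.induce (f ⁻¹' t)).map (t.restrictPreimage f) := by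
  rintro ⟨i, hi⟩ ⟨j, hj⟩ ⟨hne, x, y, hxy, rfl, rfl⟩
  exact ⟨fun h => hne (congrArg Subtype.val h), ⟨x, hi⟩, ⟨y, hj⟩, hxy, rfl, rfl⟩

theorem Preconnected.exists_rainbowWalkConnectedWith [Finite ι] (hG : G.Preconnected)
    (f : V → ι) (hf : f.Surjective) (hcl : ∀ ⦃u v⦄, u ≠ v → f u = f v → G.Adj u v) {n : ℕ}
    (hn : Nat.card ι = n + 1) : ∃ c : Sym2 V → Fin (2 * n + 1), G.RainbowWalkConnectedWith c := by
  induction n generalizing V ι with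
  | zero =>
    have : Subsingleton ι := (Nat.card_eq_one_iff_unique.mp hn).1
    exact ⟨fun _ => 0, fun u v =>
      exists_walk_nodup_map_edges_of_adj (fun huv => hcl huv (Subsingleton.elim _ _)) _⟩
  | succ n ih =>
    have : Nonempty ι := Nat.card_pos_iff.mp (by omega) |>.1
    have hQ : (G.map f).Connected := ⟨hG.map_of_surjective hf⟩
    obtain ⟨i, hi⟩ := hQ.exists_preconnected_induce_compl_singleton_of_finite
    let g := Set.restrictPreimage ({i}ᶜ : Set ι) f
    have hcl' : ∀ ⦃u v⦄, u ≠ v → g u = g v → (G.induce (f ⁻¹' {i}ᶜ)).Adj u v :=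
      fun u v huv h => hcl (Subtype.coe_injective.ne huv) (congrArg Subtype.val h)
    have hG' : (G.induce (f ⁻¹' {i}ᶜ)).Preconnected := by
      refine (hi.mono (induce_map_le_map_induce_preimage f {i}ᶜ)).of_map fun u v huv => ?_
      by_cases h : u = v
      · exact h ▸ .rfl
      · exact (hcl' h huv).reachable
    have hcard : Nat.card ↥({i}ᶜ : Set ι) = n + 1 := by
      rw [Nat.card_coe_set_eq, Set.compl_eq_univ_sdiff,
        Set.ncard_sdiff_singleton_of_mem (Set.mem_univ i), Set.ncard_univ, hn, Nat.add_sub_cancel]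
    obtain ⟨c, hc⟩ := ih hG' g (Set.restrictPreimage_surjective _ hf) hcl' hcard
    have hK : G.IsClique (f ⁻¹' {i}) := fun u hu v hv huv => hcl huv (hu.trans hv.symm)
    let e : Fin (2 * n + 1) ⊕ Bool ≃ Fin (2 * (n + 1) + 1) :=
      (Equiv.sumCongr (.refl _) finTwoEquiv.symm).trans finSumFinEquiv
    exact ⟨_, (hc.extendAcross hG hK).comp e.injective⟩

theorem Connected.rc_le_two_mul_card_sub_one [Finite ι] (hG : G.Connected) (f : V → ι)
    (hcl : ∀ ⦃u v⦄, u ≠ v → f u = f v → G.Adj u v) : rc G ≤ 2 * Nat.card ι - 1 := by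
  have : Nonempty V := hG.nonempty
  obtain ⟨n, hn⟩ := Nat.exists_eq_add_one_of_ne_zero (Nat.card_pos (α := Set.range f)).ne'
  obtain ⟨c, hc⟩ := hG.preconnected.exists_rainbowWalkConnectedWith (Set.rangeFactorization f)
    Set.rangeFactorization_surjective (fun u v huv h => hcl huv (congrArg Subtype.val h)) hn
  have hle : Nat.card (Set.range f) ≤ Nat.card ι := Finite.card_subtype_le _
  have := hc.rc_le
  omega

end SimpleGraph

/-- If `G` is a connected graph, then `rc(G) ≤ 2χ(Ḡ) − 1`, where `Ḡ` is the
complement of `G`. -/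
theorem rc_le_two_mul_chromaticNumber_compl_sub_one {V : Type*} [Fintype V]
    (G : SimpleGraph V) (hG : G.Connected) :
    (rc G : ℕ∞) ≤ 2 * Gᶜ.chromaticNumber - 1 := by
  have hχ : Gᶜ.chromaticNumber ≠ ⊤ :=
    chromaticNumber_ne_top_iff_exists.mpr ⟨_, Gᶜ.colorable_of_fintype⟩
  obtain ⟨C⟩ := Gᶜ.colorable_chromaticNumber_of_fintype
  have hrc := hG.rc_le_two_mul_card_sub_one C fun u v huv h =>
    of_not_not fun hadj => C.valid ⟨huv, hadj⟩ h
  rw [Nat.card_fin] at hrc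
  rw [← ENat.natCast_toNat hχ]
  exact_mod_cast hrc
end

section
/- Let G be a connected graph with minimum degree δ(G) ≥ 2, and let D ⊆ V(G) be a connected dominating set of G. Then rc(G) ≤ rc(G[D]) + 3, where G[D] is the subgraph of G induced by D. -/
/-! Colour `G[D]` optimally with `rc(G[D])` colours and add three new ones. An edge between two
vertices outside `D` gets the new colour `none`; an edge from `v ∉ D` into `D` gets `col v` if it
ends at a fixed neighbour `d v ∈ D` of `v`, and `!col v` otherwise. Every vertex `v` then leaves
`D` along a rainbow walk coloured `col v`, and also along one avoiding `col v`: directly if `v`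
has a second neighbour in `D`, and otherwise, as `δ(G) ≥ 2`, through a neighbour `w ∉ D` that has
a second neighbour in `D` or satisfies `col w ≠ col v`; a maximum cut `col` of the vertices with
a single neighbour in `D` provides such a `w`. Joining an exit of `u` and an exit of `v` with
disjoint colours through a rainbow path of `G[D]` and shortcutting gives a rainbow `u`–`v` path. -/

open SimpleGraph

namespace SimpleGraph

variable {V : Type*} {G : SimpleGraph V} {α : Type*}

def Walk.IsRainbow {u v : V} (p : G.Walk u v) (c : Sym2 V → α) : Prop :=
  (p.edges.map c).Nodup

namespace Walk

variable {c : Sym2 V → α} {u v w : V}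

theorem IsRainbow.bypass [DecidableEq V] {p : G.Walk u v} (h : p.IsRainbow c) :
    p.bypass.IsRainbow c :=
  p.bypass_isPath.isTrail.edges_nodup.map_on fun _ hx _ hy =>
    List.inj_on_of_nodup_map h (p.edges_bypass_subset_edges hx) (p.edges_bypass_subset_edges hy)

theorem isRainbow_append {p : G.Walk u v} {q : G.Walk v w} :
    (p.append q).IsRainbow c ↔
      p.IsRainbow c ∧ q.IsRainbow c ∧ (p.edges.map c).Disjoint (q.edges.map c) := by
  simp only [IsRainbow, edges_append, List.map_append, List.nodup_append']

theorem isRainbow_reverse {p : G.Walk u v} : p.reverse.IsRainbow c ↔ p.IsRainbow c := by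
  simp only [IsRainbow, edges_reverse, List.map_reverse, List.nodup_reverse]

end Walk

theorem exists_adj_ne_of_one_lt_degree {v : V} [Fintype (G.neighborSet v)]
    (h : 1 < G.degree v) (x : V) : ∃ w, G.Adj v w ∧ w ≠ x := by
  obtain ⟨w, hw, hwx⟩ := Finset.exists_mem_ne (G.card_neighborFinset_eq_degree v ▸ h) x
  exact ⟨w, (G.mem_neighborFinset v w).mp hw, hwx⟩

open Classical Finset in
noncomputable def cutSize [Fintype V] (G : SimpleGraph V) (S : Set V) (col : V → Bool) : ℕ :=
  #{p : V × V | p.1 ∈ S ∧ p.2 ∈ S ∧ G.Adj p.1 p.2 ∧ col p.1 ≠ col p.2}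

theorem cutSize_lt_cutSize_update [Fintype V] [DecidableEq V] {S : Set V} {col : V → Bool}
    {v w : V} (hv : v ∈ S) (hw : w ∈ S) (hvw : G.Adj v w)
    (hmono : ∀ x ∈ S, G.Adj v x → col x = col v) :
    G.cutSize S col < G.cutSize S (Function.update col v (!col v)) := by
  refine Finset.card_lt_card ((Finset.ssubset_iff_of_subset ?_).2 ⟨(v, w), ?_, ?_⟩)
  · simp only [Finset.subset_iff, Finset.mem_filter, Finset.mem_univ, true_and, Prod.forall]
    rintro x y ⟨hx, hy, hxy, hcol⟩
    have hxv : x ≠ v := by rintro rfl; exact hcol (hmono y hy hxy).symm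
    have hyv : y ≠ v := by rintro rfl; exact hcol (hmono x hx hxy.symm)
    simp [hx, hy, hxy, hcol, hxv, hyv]
  · simp [hv, hw, hvw, Function.update_of_ne hvw.ne.symm, hmono w hw hvw]
  · simp [hmono w hw hvw]

theorem exists_bool_forall_exists_adj_ne [Fintype V] (S : Set V) :
    ∃ col : V → Bool,
      ∀ v ∈ S, (∃ w ∈ S, G.Adj v w) → ∃ w ∈ S, G.Adj v w ∧ col w ≠ col v := by
  classical
  obtain ⟨col, hmax⟩ := Finite.exists_max (G.cutSize S)
  refine ⟨col, fun v hv ⟨w, hw, hvw⟩ => ?_⟩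
  by_contra! hmono
  exact (hmax _).not_gt (cutSize_lt_cutSize_update hv hw hvw hmono)

def HasSecondNeighborIn (G : SimpleGraph V) (D : Set V) (d : V → V) (v : V) : Prop :=
  ∃ t ∈ D, G.Adj v t ∧ t ≠ d v

theorem exists_bool_forall_exists_adj_hasSecondNeighborIn [Fintype V] [DecidableRel G.Adj]
    (hδ : ∀ v, 2 ≤ G.degree v) (D : Set V) (d : V → V) :
    ∃ col : V → Bool, ∀ v ∉ D, ¬ G.HasSecondNeighborIn D d v →
      ∃ w ∉ D, G.Adj v w ∧ (col w = !col v ∨ G.HasSecondNeighborIn D d w) := by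
  obtain ⟨col, hcol⟩ :=
    G.exists_bool_forall_exists_adj_ne {v | v ∉ D ∧ ¬ G.HasSecondNeighborIn D d v}
  refine ⟨col, fun v hv hsingle => ?_⟩
  obtain ⟨w, hvw, hwd⟩ := G.exists_adj_ne_of_one_lt_degree (hδ v) (d v)
  have hw : w ∉ D := fun hw => hsingle ⟨w, hw, hvw, hwd⟩
  by_cases hwsecond : G.HasSecondNeighborIn D d w
  · exact ⟨w, hw, hvw, .inr hwsecond⟩
  obtain ⟨w', ⟨hw', -⟩, hvw', hne⟩ :=
    hcol v ⟨hv, hsingle⟩ ⟨w, ⟨hw, hwsecond⟩, hvw⟩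
  exact ⟨w', hw', hvw', .inl (Bool.eq_not.mpr hne)⟩

end SimpleGraph

theorem rc_le_card_of_forall_exists_isRainbow {V α : Type*} [Fintype α] {G : SimpleGraph V}
    (c : Sym2 V → α) (hc : ∀ u v : V, ∃ p : G.Walk u v, p.IsPath ∧ p.IsRainbow c) :
    rc G ≤ Fintype.card α :=
  Nat.sInf_le ⟨Fintype.equivFin α ∘ c, fun u v =>
    let ⟨p, hp, hpc⟩ := hc u v
    ⟨p, hp, by simpa [← List.map_map] using hpc.map (Fintype.equivFin α).injective⟩⟩

theorem exists_rainbowConnectedWith_rc {V : Type*} [Finite V] {G : SimpleGraph V}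
    (hG : G.Connected) : ∃ c : Sym2 V → Fin (rc G), RainbowConnectedWith G c := by
  classical
  refine Nat.sInf_mem (s := {k | ∃ c : Sym2 V → Fin k, RainbowConnectedWith G c})
    ⟨Nat.card (Sym2 V), Finite.equivFin _, fun u v => ?_⟩
  let p := (hG.preconnected u v).some.toPath
  exact ⟨p, p.2, p.2.isTrail.edges_nodup.map (Finite.equivFin _).injective⟩

section ExtendColoring

variable {V κ : Type*} {G : SimpleGraph V} {D : Set V} {c₀ : Sym2 D → κ} {d : V → V}
  {col : V → Bool}

open Classical in
noncomputable def exitColor (d : V → V) (col : V → Bool) (v t : V) : Bool :=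
  if t = d v then col v else !col v

open Classical in
noncomputable def extendColoring (D : Set V) (c₀ : Sym2 D → κ) (d : V → V)
    (col : V → Bool) : Sym2 V → κ ⊕ Option Bool :=
  Sym2.lift ⟨fun x y =>
    if hx : x ∈ D then
      if hy : y ∈ D then .inl (c₀ s(⟨x, hx⟩, ⟨y, hy⟩))
      else .inr (some (exitColor d col y x))
    else if y ∈ D then .inr (some (exitColor d col x y)) else .inr none,
    fun x y => by by_cases hx : x ∈ D <;> by_cases hy : y ∈ D <;> simp [hx, hy, Sym2.eq_swap]⟩

theorem extendColoring_of_mem_of_mem {x y : V} (hx : x ∈ D) (hy : y ∈ D) :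
    extendColoring D c₀ d col s(x, y) = .inl (c₀ s(⟨x, hx⟩, ⟨y, hy⟩)) := by
  simp [extendColoring, hx, hy]

theorem extendColoring_of_notMem_of_mem {x t : V} (hx : x ∉ D) (ht : t ∈ D) :
    extendColoring D c₀ d col s(x, t) = .inr (some (exitColor d col x t)) := by
  simp [extendColoring, hx, ht]

theorem extendColoring_of_notMem_of_notMem {x y : V} (hx : x ∉ D) (hy : y ∉ D) :
    extendColoring D c₀ d col s(x, y) = .inr none := by
  simp [extendColoring, hx, hy]

theorem edges_map_induce_map_extendColoring {x y : D} (p : (G.induce D).Walk x y) :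
    (p.map (Embedding.induce D).toHom).edges.map (extendColoring D c₀ d col) =
      (p.edges.map c₀).map Sum.inl := by
  rw [Walk.edges_map, List.map_map, List.map_map]
  refine List.map_congr_left fun e _ => ?_
  induction e using Sym2.ind with
  | _ a b => exact extendColoring_of_mem_of_mem a.2 b.2

theorem exists_walk_isRainbow_extendColoring_of_mem
    (hc₀ : ∀ x y : D, ∃ p : (G.induce D).Walk x y, p.IsRainbow c₀) {x y : V}
    (hx : x ∈ D) (hy : y ∈ D) :
    ∃ q : G.Walk x y, q.IsRainbow (extendColoring D c₀ d col) ∧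
      ∀ a ∈ q.edges.map (extendColoring D c₀ d col), a.isLeft := by
  obtain ⟨p, hp⟩ := hc₀ ⟨x, hx⟩ ⟨y, hy⟩
  have hq := edges_map_induce_map_extendColoring (c₀ := c₀) (d := d) (col := col) p
  refine ⟨p.map (Embedding.induce D).toHom, (congrArg List.Nodup hq).mpr
    (hp.map Sum.inl_injective), fun a ha => ?_⟩
  obtain ⟨b, -, rfl⟩ := List.mem_map.mp (hq ▸ ha)
  rfl

theorem exists_path_isRainbow_extendColoring_of_exits
    (hc₀ : ∀ x y : D, ∃ p : (G.induce D).Walk x y, p.IsRainbow c₀) {u v x y : V}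
    (hx : x ∈ D) (hy : y ∈ D) {e₁ : G.Walk u x} {e₂ : G.Walk v y}
    (h₁ : e₁.IsRainbow (extendColoring D c₀ d col))
    (h₂ : e₂.IsRainbow (extendColoring D c₀ d col))
    (hr₁ : ∀ a ∈ e₁.edges.map (extendColoring D c₀ d col), a.isRight)
    (hr₂ : ∀ a ∈ e₂.edges.map (extendColoring D c₀ d col), a.isRight)
    (h₁₂ : (e₁.edges.map (extendColoring D c₀ d col)).Disjoint
      (e₂.edges.map (extendColoring D c₀ d col))) :
    ∃ p : G.Walk u v, p.IsPath ∧ p.IsRainbow (extendColoring D c₀ d col) := by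
  classical
  obtain ⟨q, hq, hl⟩ :=
    exists_walk_isRainbow_extendColoring_of_mem (d := d) (col := col) hc₀ hx hy
  have hdisj : ∀ l : List (κ ⊕ Option Bool), (∀ a ∈ l, a.isRight) →
      (q.edges.map (extendColoring D c₀ d col)).Disjoint l := fun l hr a ha hb => by
    have hleft := hl a ha
    have hright := hr a hb
    cases a <;> simp at hleft hright
  refine ⟨_, (e₁.append (q.append e₂.reverse)).bypass_isPath, Walk.IsRainbow.bypass ?_⟩
  rw [Walk.isRainbow_append, Walk.isRainbow_append, Walk.isRainbow_reverse]
  refine ⟨h₁, ⟨hq, h₂, ?_⟩, ?_⟩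
  · simpa [Walk.edges_reverse] using hdisj _ hr₂
  · simp only [Walk.edges_append, Walk.edges_reverse, List.map_append, List.map_reverse,
      List.disjoint_append_right, List.disjoint_reverse_right]
    exact ⟨(hdisj _ hr₁).symm, h₁₂⟩

theorem exists_exit_extendColoring_eq (hd : ∀ v ∉ D, d v ∈ D ∧ G.Adj (d v) v) (u : V) :
    ∃ x ∈ D, ∃ e : G.Walk u x, e.IsRainbow (extendColoring D c₀ d col) ∧
      ∀ a ∈ e.edges.map (extendColoring D c₀ d col), a = .inr (some (col u)) := by
  by_cases hu : u ∈ D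
  · exact ⟨u, hu, .nil, List.nodup_nil, by simp⟩
  obtain ⟨hdu, hadj⟩ := hd u hu
  refine ⟨d u, hdu, hadj.symm.toWalk, List.nodup_singleton _, ?_⟩
  simp [extendColoring_of_notMem_of_mem hu hdu, exitColor]

theorem exists_adj_exitColor_eq (hd : ∀ v ∉ D, d v ∈ D ∧ G.Adj (d v) v) {w : V}
    (hw : w ∉ D) {b : Bool} (h : col w = b ∨ G.HasSecondNeighborIn D d w) :
    ∃ t ∈ D, G.Adj w t ∧ exitColor d col w t = b := by
  by_cases hb : col w = b
  · exact ⟨d w, (hd w hw).1, (hd w hw).2.symm, by simp [exitColor, hb]⟩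
  obtain ⟨t, ht, hwt, htd⟩ := h.resolve_left hb
  exact ⟨t, ht, hwt, by rw [exitColor, if_neg htd]; exact (Bool.eq_not.mpr (Ne.symm hb)).symm⟩

theorem exists_exit_extendColoring_ne (hd : ∀ v ∉ D, d v ∈ D ∧ G.Adj (d v) v)
    (hcol : ∀ v ∉ D, ¬ G.HasSecondNeighborIn D d v →
      ∃ w ∉ D, G.Adj v w ∧ (col w = !col v ∨ G.HasSecondNeighborIn D d w)) (u : V) :
    ∃ x ∈ D, ∃ e : G.Walk u x, e.IsRainbow (extendColoring D c₀ d col) ∧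
      ∀ a ∈ e.edges.map (extendColoring D c₀ d col),
        a.isRight ∧ a ≠ .inr (some (col u)) := by
  by_cases hu : u ∈ D
  · exact ⟨u, hu, .nil, List.nodup_nil, by simp⟩
  by_cases hsecond : G.HasSecondNeighborIn D d u
  · obtain ⟨t, ht, hut, htd⟩ := hsecond
    refine ⟨t, ht, hut.toWalk, List.nodup_singleton _, ?_⟩
    simp [extendColoring_of_notMem_of_mem hu ht, exitColor, htd]
  obtain ⟨w, hw, huw, hw'⟩ := hcol u hu hsecond
  obtain ⟨t, ht, hwt, hwtc⟩ := exists_adj_exitColor_eq hd hw hw'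
  refine ⟨t, ht, .cons huw hwt.toWalk, ?_, ?_⟩ <;>
    simp [Walk.IsRainbow, extendColoring_of_notMem_of_notMem hu hw,
      extendColoring_of_notMem_of_mem hw ht, hwtc]

theorem exists_path_isRainbow_extendColoring
    (hc₀ : ∀ x y : D, ∃ p : (G.induce D).Walk x y, p.IsRainbow c₀)
    (hd : ∀ v ∉ D, d v ∈ D ∧ G.Adj (d v) v)
    (hcol : ∀ v ∉ D, ¬ G.HasSecondNeighborIn D d v →
      ∃ w ∉ D, G.Adj v w ∧ (col w = !col v ∨ G.HasSecondNeighborIn D d w)) (u v : V) :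
    ∃ p : G.Walk u v, p.IsPath ∧ p.IsRainbow (extendColoring D c₀ d col) := by
  obtain ⟨y, hy, e₂, h₂, hc₂⟩ :=
    exists_exit_extendColoring_eq (c₀ := c₀) (col := col) hd v
  have hr₂ : ∀ a ∈ e₂.edges.map (extendColoring D c₀ d col), a.isRight := fun a ha => by
    simp [hc₂ a ha]
  by_cases huv : col u = col v
  · obtain ⟨x, hx, e₁, h₁, hc₁⟩ := exists_exit_extendColoring_ne hd hcol u
    exact exists_path_isRainbow_extendColoring_of_exits hc₀ hx hy h₁ h₂
      (fun a ha => (hc₁ a ha).1) hr₂ fun a ha hb => (hc₁ a ha).2 (by rw [hc₂ a hb, huv])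
  · obtain ⟨x, hx, e₁, h₁, hc₁⟩ := exists_exit_extendColoring_eq hd u
    exact exists_path_isRainbow_extendColoring_of_exits hc₀ hx hy h₁ h₂
      (fun a ha => by simp [hc₁ a ha]) hr₂
      fun a ha hb => huv (by simpa [hc₁ a ha] using hc₂ a hb)

end ExtendColoring

theorem rc_le_rc_induce_add_three_general {V : Type*} [Fintype V] (G : SimpleGraph V)
    [DecidableRel G.Adj] (hδ : ∀ v : V, 2 ≤ G.degree v)
    (D : Set V) (hDconn : (G.induce D).Connected)
    (hDdom : ∀ v ∉ D, ∃ u ∈ D, G.Adj u v) :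
    rc G ≤ rc (G.induce D) + 3 := by
  obtain ⟨c₀, hc₀⟩ := exists_rainbowConnectedWith_rc hDconn
  choose! d hd using hDdom
  obtain ⟨col, hcol⟩ := G.exists_bool_forall_exists_adj_hasSecondNeighborIn hδ D d
  calc rc G ≤ Fintype.card (Fin (rc (G.induce D)) ⊕ Option Bool) :=
        rc_le_card_of_forall_exists_isRainbow _ (exists_path_isRainbow_extendColoring
          (fun x y => (hc₀ x y).imp fun _ => And.right) hd hcol)
    _ = rc (G.induce D) + 3 := by simp

/-- If `G` is connected with minimum degree at least 2 and `D` is a connected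
dominating set of `G`, then `rc(G) ≤ rc(G[D]) + 3`. -/
theorem rc_le_rc_induce_add_three {V : Type*} [Fintype V] (G : SimpleGraph V)
    [DecidableRel G.Adj] (hG : G.Connected) (hδ : ∀ v : V, 2 ≤ G.degree v)
    (D : Set V) (hDconn : (G.induce D).Connected)
    (hDdom : ∀ v ∉ D, ∃ u ∈ D, G.Adj u v) :
    rc G ≤ rc (G.induce D) + 3 :=
  rc_le_rc_induce_add_three_general G hδ D hDconn hDdom
end

section
/- Every connected graph G contains a connected dominating set D and a set Y ⊆ D such that Y is an independent set of G and |D| = 2|Y| − 1. -/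
/-!
Start from `D = Y = {v}`. As long as `D` is not dominating, connectivity of `G` gives a vertex
`w` at distance exactly two from `D`, reached through a neighbour `u` of `D`. Adding `u` and `w`
to `D` and `w` to `Y` keeps `D` connected and `Y` independent (`w` has no neighbour in `D`), and
adds two vertices to `D` and one to `Y`. Since `V` is finite, a pair with `|D|` maximal is
dominating.
-/

open SimpleGraph

namespace SimpleGraph

variable {V : Type*} {G : SimpleGraph V}

structure IsCDSCandidate (G : SimpleGraph V) (D Y : Finset V) : Prop where
  subset : Y ⊆ D
  connected : (G.induce (D : Set V)).Connected
  isIndepSet : G.IsIndepSet (Y : Set V)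
  card_eq : D.card = 2 * Y.card - 1

lemma isCDSCandidate_singleton (v : V) : G.IsCDSCandidate {v} {v} where
  subset := subset_rfl
  connected := by
    rw [Finset.coe_singleton]
    exact (connected_iff _).mpr ⟨.of_subsingleton, ⟨⟨v, rfl⟩⟩⟩
  isIndepSet := by simp
  card_eq := by simp

lemma IsCDSCandidate.nonempty {D Y : Finset V} (h : G.IsCDSCandidate D Y) : D.Nonempty :=
  let ⟨⟨x, hx⟩⟩ := h.connected.nonempty
  ⟨x, hx⟩

lemma Preconnected.exists_adj_adj_of_not_dominated (hG : G.Preconnected) {s : Set V}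
    {d₀ v : V} (hd₀ : d₀ ∈ s) (hv : v ∉ s) (hvs : ∀ d ∈ s, ¬ G.Adj d v) :
    ∃ d ∈ s, ∃ u w, G.Adj d u ∧ G.Adj u w ∧ w ∉ s ∧ ∀ d ∈ s, ¬ G.Adj d w := by
  let N : Set V := s ∪ {x | ∃ d ∈ s, G.Adj d x}
  obtain ⟨p⟩ := hG d₀ v
  obtain ⟨e, -, huN, hwN⟩ := p.exists_boundary_dart N (Or.inl hd₀) fun h =>
    h.elim hv fun ⟨d, hd, hdv⟩ => hvs d hd hdv
  have hw : e.snd ∉ s ∧ ∀ d ∈ s, ¬ G.Adj d e.snd := by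
    simp only [N, Set.mem_union, Set.mem_ofPred_eq, not_or, not_exists, not_and] at hwN
    exact hwN
  obtain ⟨d, hd, hdu⟩ : ∃ d ∈ s, G.Adj d e.fst :=
    huN.resolve_left fun hu => hw.2 _ hu e.adj
  exact ⟨d, hd, e.fst, e.snd, hdu, e.adj, hw⟩

lemma IsCDSCandidate.insert_insert [DecidableEq V] {D Y : Finset V} {d u w : V}
    (h : G.IsCDSCandidate D Y) (hd : d ∈ D) (hdu : G.Adj d u) (huw : G.Adj u w)
    (hw : w ∉ D) (hwD : ∀ x ∈ D, ¬ G.Adj x w) :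
    G.IsCDSCandidate (insert w (insert u D)) (insert w Y) where
  subset := Finset.insert_subset_insert _ (h.subset.trans (Finset.subset_insert _ _))
  connected := by
    have hD' : (↑(insert w (insert u D)) : Set V) = ↑D ∪ {u, w} := by
      ext x
      simp only [Finset.coe_insert, Set.mem_insert_iff, Set.mem_union, Finset.mem_coe,
        Set.mem_singleton_iff]
      tauto
    rw [hD']
    exact connected_induce_union h.connected.preconnected
      (induce_pair_connected_of_adj huw).preconnected hd (Set.mem_insert u _) hdu
  isIndepSet := by
    rw [Finset.coe_insert]
    refine Set.pairwise_insert.mpr ⟨h.isIndepSet, fun y hy _ => ?_⟩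
    have hyw := hwD y (h.subset hy)
    exact ⟨fun hwy => hyw hwy.symm, hyw⟩
  card_eq := by
    have hu : u ∉ D := fun hu => hwD u hu huw
    have hwu : w ∉ insert u D := by
      rw [Finset.mem_insert, not_or]
      exact ⟨fun hwu => hwD d hd (hwu ▸ hdu), hw⟩
    -- `D ≠ ∅` forces `Y ≠ ∅`, so the truncated subtraction in `2 * #Y - 1` is harmless.
    have hD := Finset.card_pos.mpr h.nonempty
    have := h.card_eq
    rw [Finset.card_insert_of_notMem hwu, Finset.card_insert_of_notMem hu,
      Finset.card_insert_of_notMem fun hwY => hw (h.subset hwY)]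
    omega

lemma IsCDSCandidate.exists_card_lt (hG : G.Preconnected) {D Y : Finset V}
    (h : G.IsCDSCandidate D Y) (hdom : ∃ v ∉ D, ∀ u ∈ D, ¬ G.Adj u v) :
    ∃ D' Y', G.IsCDSCandidate D' Y' ∧ D.card < D'.card := by
  classical
  obtain ⟨v, hvD, hv⟩ := hdom
  obtain ⟨d₀, hd₀⟩ := h.nonempty
  obtain ⟨d, hd, u, w, hdu, huw, hw, hwD⟩ :=
    hG.exists_adj_adj_of_not_dominated (s := D) hd₀ hvD hv
  refine ⟨_, _, h.insert_insert hd hdu huw hw hwD, Finset.card_lt_card ?_⟩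
  exact (Finset.ssubset_iff_of_subset ((D.subset_insert u).trans (Finset.subset_insert _ _))).mpr
    ⟨w, Finset.mem_insert_self _ _, hw⟩

end SimpleGraph

/-- Every connected graph contains a connected dominating set `D` together with
an independent set `Y ⊆ D` such that `|D| = 2|Y| − 1`. -/
theorem exists_connectedDominatingSet_card_eq {V : Type*} [Fintype V]
    (G : SimpleGraph V) (hG : G.Connected) :
    ∃ D Y : Finset V, Y ⊆ D ∧
      (G.induce (↑D : Set V)).Connected ∧
      (∀ v ∉ D, ∃ u ∈ D, G.Adj u v) ∧
      ((↑Y : Set V).Pairwise fun a b => ¬ G.Adj a b) ∧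
      D.card = 2 * Y.card - 1 := by
  classical
  obtain ⟨v₀⟩ := hG.nonempty
  let candidates := Finset.univ.filter fun p : Finset V × Finset V => G.IsCDSCandidate p.1 p.2
  obtain ⟨⟨D, Y⟩, hmem, hmax⟩ := candidates.exists_max_image (fun p => p.1.card)
    ⟨({v₀}, {v₀}), Finset.mem_filter.mpr ⟨Finset.mem_univ _, isCDSCandidate_singleton v₀⟩⟩
  have h : G.IsCDSCandidate D Y := (Finset.mem_filter.mp hmem).2
  refine ⟨D, Y, h.subset, h.connected, ?_, h.isIndepSet, h.card_eq⟩
  by_contra! hdom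
  obtain ⟨D', Y', h', hlt⟩ := h.exists_card_lt hG.preconnected hdom
  exact hlt.not_ge (hmax (D', Y') (Finset.mem_filter.mpr ⟨Finset.mem_univ _, h'⟩))
end

section
/- Every connected graph G contains a connected dominating set D with |D| ≤ 2α(G) − 1, where α(G) is the independence number of G. -/
/-!
Grow a connected set `D` together with an independent set `S ⊆ D`, keeping `|D| < 2|S|`
(this form avoids truncated subtraction), starting from a single vertex. If `D` is not
dominating, a path from `D` to an undominated vertex leaves the closed neighbourhood of `D`
along an edge `u w`, where `u` has a neighbour `d ∈ D` and `w` has none. Adding `u, w` to `D`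
and `w` to `S` keeps `D` connected and `S` independent, and adds at most two vertices to `D`
and one to `S`. When `D` dominates, `|D| ≤ 2|S| - 1 ≤ 2α(G) - 1`.
-/

open SimpleGraph

open Finset

namespace SimpleGraph

variable {V : Type*} {G : SimpleGraph V}

variable (G) in
def IsDominatingSet (D : Finset V) : Prop :=
  ∀ v ∉ D, ∃ u ∈ D, G.Adj u v

lemma exists_adj_adj_of_not_isDominatingSet (hG : G.Connected) {D : Finset V} (hD : D.Nonempty)
    (hdom : ¬ G.IsDominatingSet D) :
    ∃ d ∈ D, ∃ u w, G.Adj d u ∧ G.Adj u w ∧ w ∉ D ∧ ∀ d' ∈ D, ¬ G.Adj d' w := by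
  simp only [IsDominatingSet, not_forall, not_exists, not_and] at hdom
  obtain ⟨x, hxD, hx⟩ := hdom
  obtain ⟨d₀, hd₀⟩ := hD
  let closedNbhd : Set V := {v | v ∈ D ∨ ∃ d ∈ D, G.Adj d v}
  obtain ⟨⟨⟨u, w⟩, huw⟩, -, hu, hw⟩ :=
    (hG d₀ x).some.exists_boundary_dart closedNbhd (.inl hd₀)
      (by rintro (hxD' | ⟨d, hd, hdx⟩) <;> [exact hxD hxD'; exact hx d hd hdx])
  simp only [closedNbhd, Set.mem_ofPred_eq, not_or, not_exists, not_and] at hu hw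
  obtain ⟨hwD, hwN⟩ := hw
  obtain ⟨d, hd, hdu⟩ := hu.resolve_left fun huD => hwN u huD huw
  exact ⟨d, hd, u, w, hdu, huw, hwD, hwN⟩

lemma Connected.induce_insert_insert {D : Set V} (hD : (G.induce D).Connected) {d u w : V}
    (hd : d ∈ D) (hdu : G.Adj d u) (huw : G.Adj u w) :
    (G.induce (insert u (insert w D))).Connected := by
  have h := connected_induce_union hD.preconnected (induce_pair_connected_of_adj huw).preconnected
    hd (Set.mem_insert u {w}) hdu
  rwa [Set.union_insert, Set.union_singleton] at h

lemma exists_isDominatingSet_of_connected_indep [Fintype V] (hG : G.Connected) (D S : Finset V)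
    (hD : (G.induce ↑D).Connected) (hSD : S ⊆ D) (hS : G.IsIndepSet ↑S)
    (hcard : #D < 2 * #S) :
    ∃ D S : Finset V, (G.induce ↑D).Connected ∧ G.IsDominatingSet D ∧ G.IsIndepSet ↑S ∧
      #D < 2 * #S := by
  classical
  by_cases hdom : G.IsDominatingSet D
  · exact ⟨D, S, hD, hdom, hS, hcard⟩
  obtain ⟨d, hd, u, w, hdu, huw, hwD, hwN⟩ :=
    exists_adj_adj_of_not_isDominatingSet hG (nonempty_coe_sort.mp hD.nonempty) hdom
  have hwS : w ∉ S := fun hw => hwD (hSD hw)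
  have hgrow : #D < #(insert u (insert w D)) :=
    (card_lt_card (ssubset_insert hwD)).trans_le (card_le_card (subset_insert _ _))
  have hgrow_le : #(insert u (insert w D)) ≤ #D + 2 :=
    (card_insert_le _ _).trans (Nat.succ_le_succ (card_insert_le _ _))
  have hbound : #(insert u (insert w D)) ≤ Fintype.card V := card_le_univ _
  refine exists_isDominatingSet_of_connected_indep hG (insert u (insert w D)) (insert w S) ?_
    ((insert_subset_insert w hSD).trans (subset_insert _ _)) ?_ ?_
  · rw [coe_insert, coe_insert]
    exact hD.induce_insert_insert hd hdu huw
  · rw [coe_insert]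
    exact hS.insert fun s hs _ => ⟨fun h => hwN s (hSD hs) h.symm, hwN s (hSD hs)⟩
  · rw [card_insert_of_notMem hwS]
    omega
termination_by Fintype.card V - #D

end SimpleGraph

theorem indepNum_eq_indepNum {V : Type*} (G : SimpleGraph V) :
    _root_.indepNum G = G.indepNum := by
  simp only [_root_.indepNum, SimpleGraph.indepNum, isNIndepSet_iff, and_comm, eq_comm]

/-- Every connected graph contains a connected dominating set `D` with
`|D| ≤ 2α(G) − 1`. -/
theorem exists_connectedDominatingSet_card_le {V : Type*} [Fintype V]
    (G : SimpleGraph V) (hG : G.Connected) :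
    ∃ D : Finset V,
      (G.induce (↑D : Set V)).Connected ∧
      (∀ v ∉ D, ∃ u ∈ D, G.Adj u v) ∧
      D.card ≤ 2 * _root_.indepNum G - 1 := by
  obtain ⟨v⟩ := hG.nonempty
  obtain ⟨D, S, hD, hdom, hS, hcard⟩ :=
    exists_isDominatingSet_of_connected_indep hG {v} {v}
      (by rw [coe_singleton]; exact .of_subsingleton) subset_rfl (by simp) (by simp)
  have hα := indepNum_eq_indepNum G ▸ hS.card_le_indepNum
  exact ⟨D, hD, hdom, by omega⟩
end

section
/- Let G be a connected graph with minimum degree δ(G) ≥ 2, let D be a connected dominating set of G, and let Y ⊆ D be an independent set of G with |D| = 2|Y| − 1. If there exists a vertex w ∈ V(G) \ D that has no neighbor in Y, then rc(G) ≤ 2α(G) − 1. -/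
open SimpleGraph

/-!
As `insert w Y` is independent, `α(G) ≥ |Y| + 1`, so it suffices to show `rc(G) ≤ |D| + 2`.
The `|D| - 1` edges of a spanning tree of `G[D]` serve as their own colours, and three more
colours `some true`, `some false`, `none` are used on the other edges. Every vertex `v ∉ D` gets a
label `ℓ v` and a primary edge into `D` coloured `some (ℓ v)`; if it has two neighbours in `D` it
also gets one coloured `some (!ℓ v)`, and edges outside `D` are coloured `none`. A vertex with only
one neighbour in `D` has, as `δ(G) ≥ 2`, a neighbour outside `D`, and a labeling maximising the
cut makes the label of such a neighbour differ; through it `v` reaches `D` with colours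
`none, some (!ℓ v)`. So every `v ∉ D` also has a secondary walk into `D` avoiding `some (ℓ v)`.
Two vertices outside `D` are joined through the tree by their primary edges if their labels
differ, and otherwise by the primary edge of one and the secondary walk of the other.
-/

open Finset

theorem List.nodup_map_inr_append_append {α β : Type*} {M : List (α ⊕ β)} {L₁ L₂ : List β}
    (hM : M.Nodup) (hML : ∀ x ∈ M, x.isLeft) (hL : (L₁ ++ L₂).Nodup) :
    (L₁.map Sum.inr ++ (M ++ L₂.map Sum.inr)).Nodup := by
  refine (List.perm_append_comm_assoc _ _ _).nodup_iff.2 (List.nodup_append.2 ⟨hM, ?_, ?_⟩)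
  · rw [← List.map_append]
    exact hL.map Sum.inr_injective
  · rintro x hx _ hy rfl
    rw [← List.map_append, List.mem_map] at hy
    obtain ⟨b, -, rfl⟩ := hy
    simpa using hML _ hx

namespace SimpleGraph

variable {V : Type*} {G : SimpleGraph V}

def HasEntryWalk {α β : Type*} (G : SimpleGraph V) (c : Sym2 V → α ⊕ β) (D : Set V) (v : V)
    (L : List β) : Prop :=
  ∃ d ∈ D, ∃ q : G.Walk v d, q.edges.map c = L.map Sum.inr

section Entry

variable {α β : Type*} {c : Sym2 V → α ⊕ β} {D : Set V}

theorem HasEntryWalk.nil {d : V} (hd : d ∈ D) : G.HasEntryWalk c D d [] :=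
  ⟨d, hd, .nil, rfl⟩

theorem HasEntryWalk.cons {u v : V} {b : β} {L : List β} (huv : G.Adj v u)
    (hc : c s(v, u) = .inr b) (hu : G.HasEntryWalk c D u L) : G.HasEntryWalk c D v (b :: L) := by
  obtain ⟨d, hd, q, hq⟩ := hu
  exact ⟨d, hd, .cons huv q, by simp [hc, hq]⟩

theorem exists_walk_nodup_of_hasEntryWalk
    (htree : ∀ a ∈ D, ∀ b ∈ D, ∃ t : G.Walk a b, (t.edges.map c).Nodup ∧ ∀ e ∈ t.edges, (c e).isLeft)
    {u v : V} {Lu Lv : List β} (hu : G.HasEntryWalk c D u Lu) (hv : G.HasEntryWalk c D v Lv)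
    (hL : (Lu ++ Lv).Nodup) : ∃ p : G.Walk u v, (p.edges.map c).Nodup := by
  obtain ⟨du, hdu, qu, hqu⟩ := hu
  obtain ⟨dv, hdv, qv, hqv⟩ := hv
  obtain ⟨t, ht, htL⟩ := htree du hdu dv hdv
  refine ⟨qu.append (t.append qv.reverse), ?_⟩
  simp only [Walk.edges_append, Walk.edges_reverse, List.map_append, List.map_reverse, hqu, hqv]
  rw [← List.map_reverse]
  exact List.nodup_map_inr_append_append ht (by simpa using htL)
    (((List.reverse_perm Lv).append_left Lu).nodup_iff.2 hL)

theorem exists_walk_nodup_of_entries (χ : V → β)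
    (htree : ∀ a ∈ D, ∀ b ∈ D, ∃ t : G.Walk a b, (t.edges.map c).Nodup ∧ ∀ e ∈ t.edges, (c e).isLeft)
    (hprim : ∀ v ∉ D, G.HasEntryWalk c D v [χ v])
    (hsec : ∀ v ∉ D, ∃ L, G.HasEntryWalk c D v L ∧ (χ v :: L).Nodup) (u v : V) :
    ∃ q : G.Walk u v, (q.edges.map c).Nodup := by
  by_cases hu : u ∈ D
  · by_cases hv : v ∈ D
    · exact exists_walk_nodup_of_hasEntryWalk htree (.nil hu) (.nil hv) List.nodup_nil
    · exact exists_walk_nodup_of_hasEntryWalk htree (.nil hu) (hprim v hv) (by simp)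
  by_cases hv : v ∈ D
  · exact exists_walk_nodup_of_hasEntryWalk htree (hprim u hu) (.nil hv) (by simp)
  by_cases hχ : χ u = χ v
  · obtain ⟨L, hL, hnodup⟩ := hsec v hv
    exact exists_walk_nodup_of_hasEntryWalk htree (hprim u hu) hL (by rwa [hχ])
  · exact exists_walk_nodup_of_hasEntryWalk htree (hprim u hu) (hprim v hv) (by simpa using hχ)

end Entry

theorem exists_tree_of_connected_induce {D : Set V} [Finite D] (hD : (G.induce D).Connected) :
    ∃ T ≤ G, (∀ ⦃x y⦄, T.Adj x y → x ∈ D) ∧ (∀ a ∈ D, ∀ b ∈ D, T.Reachable a b) ∧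
      Nat.card T.edgeSet + 1 = Nat.card D := by
  classical
  have := Fintype.ofFinite D
  obtain ⟨T, hTD, hT⟩ := hD.exists_isTree_le
  let f := Function.Embedding.subtype (· ∈ D)
  refine ⟨T.map f, (map_le_iff_le_comap f T G).2 hTD, ?_, ?_, ?_⟩
  · rintro _ _ ⟨-, x, y, -, rfl, -⟩
    exact x.2
  · intro a ha b hb
    exact (hT.connected ⟨a, ha⟩ ⟨b, hb⟩).map (Embedding.map f T).toHom
  · rw [edgeSet_map, Nat.card_image_of_injective f.sym2Map.injective]
    simpa [Nat.card_eq_fintype_card, edgeFinset_card] using hT.card_edgeFinset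

theorem exists_labeling_adj_ne [Finite V] (G : SimpleGraph V) (B : Set V) :
    ∃ ℓ : V → Bool, ∀ v ∈ B, (∃ u ∈ B, G.Adj v u) → ∃ u ∈ B, G.Adj v u ∧ ℓ u ≠ ℓ v := by
  classical
  have := Fintype.ofFinite V
  let cut : (V → Bool) → ℕ := fun ℓ =>
    #{q : V × V | q.1 ∈ B ∧ q.2 ∈ B ∧ G.Adj q.1 q.2 ∧ ℓ q.1 ≠ ℓ q.2}
  obtain ⟨ℓ, -, hmax⟩ := exists_max_image univ cut univ_nonempty
  refine ⟨ℓ, fun v hv ⟨u, hu, hvu⟩ => ?_⟩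
  by_contra! hsame
  let ℓ' := Function.update ℓ v (!ℓ v)
  have hlt : cut ℓ < cut ℓ' := by
    refine card_lt_card (ssubset_iff_of_subset ?_ |>.2 ⟨(v, u), ?_, ?_⟩)
    · simp only [subset_iff, mem_filter, mem_univ, true_and]
      rintro ⟨x, y⟩ ⟨hx, hy, hxy, hne⟩
      have hxv : x ≠ v := by rintro rfl; exact hne (hsame y hy hxy).symm
      have hyv : y ≠ v := by rintro rfl; exact hne (hsame x hx hxy.symm)
      simp [ℓ', hx, hy, hxy, hxv, hyv, hne]
    · have huv : u ≠ v := hvu.ne'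
      simp [ℓ', hv, hu, hvu, huv, hsame u hu hvu]
    · simp [hsame u hu hvu]
  exact (hmax ℓ' (mem_univ _)).not_gt hlt

def HasTwoNeighborsIn (G : SimpleGraph V) (D : Set V) (v : V) : Prop :=
  ∃ x ∈ D, ∃ y ∈ D, x ≠ y ∧ G.Adj v x ∧ G.Adj v y

theorem exists_adj_notMem_of_not_hasTwoNeighborsIn {D : Set V} {v : V}
    [Fintype (G.neighborSet v)] (hv : 2 ≤ G.degree v) (h : ¬ G.HasTwoNeighborsIn D v) :
    ∃ u ∉ D, G.Adj v u := by
  rw [← card_neighborFinset_eq_degree] at hv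
  obtain ⟨x, hx, y, hy, hxy⟩ := one_lt_card.1 hv
  rw [mem_neighborFinset] at hx hy
  by_contra! hD
  have hmem : ∀ u, G.Adj v u → u ∈ D := fun u hu => by_contra fun h => hD u h hu
  exact h ⟨x, hmem x hx, y, hmem y hy, hxy, hx, hy⟩

theorem exists_coloring_of_dominating {D : Set V} (ℓ : V → Bool) (hDdom : ∀ v ∉ D, ∃ d ∈ D, G.Adj d v) :
    ∃ σ : Sym2 V → Option Bool, (∀ ⦃u v⦄, u ∉ D → v ∉ D → σ s(u, v) = none) ∧
      (∀ v ∉ D, ∃ d ∈ D, G.Adj v d ∧ σ s(v, d) = some (ℓ v)) ∧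
      (∀ v ∉ D, G.HasTwoNeighborsIn D v → ∃ d ∈ D, G.Adj v d ∧ σ s(v, d) = some (!ℓ v)) := by
  classical
  choose! d₁ hd₁ hd₁v using hDdom
  have hsecond : ∀ v, G.HasTwoNeighborsIn D v → ∃ d ∈ D, d ≠ d₁ v ∧ G.Adj v d := by
    rintro v ⟨x, hx, y, hy, hxy, hvx, hvy⟩
    by_cases hx₁ : x = d₁ v
    · exact ⟨y, hy, hx₁ ▸ hxy.symm, hvy⟩
    · exact ⟨x, hx, hx₁, hvx⟩
  choose! d₂ hd₂ hd₂₁ hvd₂ using hsecond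
  let port (v d : V) : Option Bool :=
    if d = d₁ v then some (ℓ v) else if d = d₂ v then some (!ℓ v) else none
  refine ⟨Sym2.lift ⟨fun x y => if x ∈ D then (if y ∈ D then none else port y x)
      else (if y ∈ D then port x y else none), fun x y => by dsimp only; split_ifs <;> rfl⟩, ?_, ?_, ?_⟩
  · intro u v hu hv
    simp [hu, hv]
  · intro v hv
    exact ⟨d₁ v, hd₁ v hv, (hd₁v v hv).symm, by simp [hv, hd₁ v hv, port]⟩
  · intro v hv h
    exact ⟨d₂ v, hd₂ v h, hvd₂ v h, by simp [hv, hd₂ v h, hd₂₁ v h, port]⟩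

open Classical in
noncomputable def extendByEdges (T : SimpleGraph V) {β : Type*} (σ : Sym2 V → β) (e : Sym2 V) :
    T.edgeSet ⊕ β :=
  if h : e ∈ T.edgeSet then .inl ⟨e, h⟩ else .inr (σ e)

theorem extendByEdges_of_notMem {T : SimpleGraph V} {β : Type*} {σ : Sym2 V → β} {e : Sym2 V}
    (he : e ∉ T.edgeSet) : extendByEdges T σ e = .inr (σ e) := by
  simp [extendByEdges, he]

theorem Reachable.exists_walk_extendByEdges_nodup {T : SimpleGraph V} {β : Type*}
    (σ : Sym2 V → β) (hTG : T ≤ G) {a b : V} (hab : T.Reachable a b) :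
    ∃ p : G.Walk a b, (p.edges.map (extendByEdges T σ)).Nodup ∧
      ∀ e ∈ p.edges, (extendByEdges T σ e).isLeft := by
  obtain ⟨q, hq⟩ := hab.exists_isPath
  have hT {e} (he : e ∈ q.edges) : extendByEdges T σ e = .inl ⟨e, q.edges_subset_edgeSet he⟩ := by
    simp [extendByEdges, q.edges_subset_edgeSet he]
  refine ⟨q.mapLe hTG, ?_, ?_⟩ <;> rw [Walk.edges_mapLe_eq_edges]
  · refine hq.isTrail.edges_nodup.map_on fun x hx y hy hxy => ?_
    simpa [hT hx, hT hy] using hxy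
  · intro e he
    simp [hT he]

end SimpleGraph

theorem rc_le_of_forall_exists_walk_nodup {V β : Type*} {G : SimpleGraph V} [Finite β]
    (c : Sym2 V → β)
    (h : ∀ u v, ∃ p : G.Walk u v, (p.edges.map c).Nodup) : rc G ≤ Nat.card β := by
  classical
  refine Nat.sInf_le ⟨Finite.equivFin β ∘ c, fun u v => ?_⟩
  obtain ⟨p, hp⟩ := h u v
  refine ⟨p.bypass, p.bypass_isPath, ?_⟩
  rw [← List.map_map]
  exact (hp.sublist (p.edges_bypass_sublist_edges.map c)).map (Finite.equivFin β).injective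

theorem rc_le_card_add_two {V : Type*} [Fintype V] (G : SimpleGraph V) [DecidableRel G.Adj]
    (hδ : ∀ v, 2 ≤ G.degree v) (D : Finset V) (hDconn : (G.induce (↑D : Set V)).Connected)
    (hDdom : ∀ v ∉ D, ∃ u ∈ D, G.Adj u v) : rc G ≤ D.card + 2 := by
  obtain ⟨T, hTG, hTD, hreach, hcard⟩ := exists_tree_of_connected_induce hDconn
  obtain ⟨ℓ, hℓ⟩ := exists_labeling_adj_ne G (↑D : Set V)ᶜ
  obtain ⟨σ, hσout, hσ₁, hσ₂⟩ := exists_coloring_of_dominating (D := ↑D) ℓ hDdom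
  set c := extendByEdges T σ
  have hc {v : V} (hv : v ∉ D) (u : V) : c s(v, u) = .inr (σ s(v, u)) :=
    extendByEdges_of_notMem fun h => hv (hTD h)
  have hprim : ∀ v ∉ D, G.HasEntryWalk c D v [some (ℓ v)] := by
    intro v hv
    obtain ⟨d, hd, hvd, hσd⟩ := hσ₁ v hv
    exact .cons hvd (by rw [hc hv, hσd]) (.nil hd)
  have hsec : ∀ v ∉ D, ∃ L, G.HasEntryWalk c D v L ∧ (some (ℓ v) :: L).Nodup := by
    intro v hv
    by_cases h2 : G.HasTwoNeighborsIn D v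
    · obtain ⟨d, hd, hvd, hσd⟩ := hσ₂ v hv h2
      exact ⟨_, .cons hvd (by rw [hc hv, hσd]) (.nil hd), by simp⟩
    · obtain ⟨u, hu, hvu⟩ := exists_adj_notMem_of_not_hasTwoNeighborsIn (hδ v) h2
      obtain ⟨w, hw, hvw, hne⟩ := hℓ v hv ⟨u, hu, hvu⟩
      exact ⟨_, .cons hvw (by rw [hc hv, hσout hv hw]) (hprim w hw), by simp [Ne.symm hne]⟩
  have hrc := rc_le_of_forall_exists_walk_nodup c <| exists_walk_nodup_of_entries
    (fun v => some (ℓ v)) (fun a ha b hb => (hreach a ha b hb).exists_walk_extendByEdges_nodup σ hTG)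
    hprim hsec
  have hcolours : Nat.card (T.edgeSet ⊕ Option Bool) = Nat.card T.edgeSet + 3 := by
    simp [Nat.card_sum]
  rw [Nat.card_coe_set_eq (D : Set V), Set.ncard_coe_finset] at hcard
  omega

theorem card_le_indepNum {V : Type*} [Fintype V] {G : SimpleGraph V} {s : Finset V}
    (hs : (↑s : Set V).Pairwise fun a b => ¬ G.Adj a b) : s.card ≤ _root_.indepNum G :=
  le_csSup ⟨Fintype.card V, by rintro _ ⟨t, rfl, -⟩; exact t.card_le_univ⟩ ⟨s, rfl, hs⟩

theorem rc_le_of_outside_vertex_no_neighbor_general {V : Type*} [Fintype V]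
    (G : SimpleGraph V) [DecidableRel G.Adj]
    (hδ : ∀ v : V, 2 ≤ G.degree v)
    (D Y : Finset V) (hYD : Y ⊆ D)
    (hDconn : (G.induce (↑D : Set V)).Connected)
    (hDdom : ∀ v ∉ D, ∃ u ∈ D, G.Adj u v)
    (hYindep : (↑Y : Set V).Pairwise fun a b => ¬ G.Adj a b)
    (hcard : D.card = 2 * Y.card - 1)
    (hw : ∃ w : V, w ∉ D ∧ ∀ y ∈ Y, ¬ G.Adj w y) :
    rc G ≤ 2 * _root_.indepNum G - 1 := by
  classical
  obtain ⟨w, hwD, hwY⟩ := hw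
  obtain ⟨⟨d, hd⟩⟩ := hDconn.nonempty
  have hD : 0 < D.card := card_pos.2 ⟨d, hd⟩
  have hindep : (↑(insert w Y) : Set V).Pairwise fun a b => ¬ G.Adj a b := by
    rw [coe_insert]
    exact hYindep.insert fun y hy _ => ⟨hwY y hy, fun h => hwY y hy h.symm⟩
  have hα := card_le_indepNum hindep
  rw [card_insert_of_notMem fun h => hwD (hYD h)] at hα
  have := rc_le_card_add_two G hδ D hDconn hDdom
  omega

/-- Let `G` be connected with minimum degree at least 2, `D` a connected
dominating set, and `Y ⊆ D` an independent set with `|D| = 2|Y| − 1`. If some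
vertex `w ∉ D` has no neighbor in `Y`, then `rc(G) ≤ 2α(G) − 1`. -/
theorem rc_le_of_outside_vertex_no_neighbor {V : Type*} [Fintype V]
    (G : SimpleGraph V) [DecidableRel G.Adj] (hG : G.Connected)
    (hδ : ∀ v : V, 2 ≤ G.degree v)
    (D Y : Finset V) (hYD : Y ⊆ D)
    (hDconn : (G.induce (↑D : Set V)).Connected)
    (hDdom : ∀ v ∉ D, ∃ u ∈ D, G.Adj u v)
    (hYindep : (↑Y : Set V).Pairwise fun a b => ¬ G.Adj a b)
    (hcard : D.card = 2 * Y.card - 1)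
    (hw : ∃ w : V, w ∉ D ∧ ∀ y ∈ Y, ¬ G.Adj w y) :
    rc G ≤ 2 * _root_.indepNum G - 1 :=
  rc_le_of_outside_vertex_no_neighbor_general G hδ D Y hYD hDconn hDdom hYindep hcard hw
end

section
/- Let G' be a connected graph on n ≥ 3 vertices with exactly n edges (i.e., G' is a connected unicyclic graph, obtained from a spanning tree T with e(T) = n − 1 edges by adding one extra edge). Then rc(G') ≤ e(T) − 1 = n − 2. -/
open SimpleGraph

/-!
Deleting an edge `xv` of the cycle leaves a spanning tree `T`. Let `e₁` and `e₂` be the end edges,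
at `x` and at `v`, of the `T`-path from `x` to `v`; give `xv`, `e₁`, `e₂` one common colour and
the remaining `n - 3` edges pairwise distinct colours. A `T`-path using at most one of `e₁`, `e₂`
is rainbow. A `T`-path using both runs through the whole `T`-path between `x` and `v`, and
replacing that segment by `xv` gives a path meeting the three edges only in `xv`.
-/

lemma Set.exists_fin_collapsing_injOn {α : Type*} (E S : Set α) [Finite ↥(E \ S)] :
    ∃ c : α → Fin ((E \ S).ncard + 1),
      ∀ a ∈ E, ∀ b ∈ E, c a = c b → a = b ∨ a ∈ S ∧ b ∈ S := by
  classical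
  refine ⟨fun a => if h : a ∈ E \ S then (Finite.equivFin ↥(E \ S) ⟨a, h⟩).succ else 0,
    fun a ha b hb hab => ?_⟩
  by_cases haS : a ∈ S <;> by_cases hbS : b ∈ S <;> simp [ha, hb, haS, hbS] at hab ⊢
  · exact absurd hab.symm (Fin.succ_ne_zero _)
  · exact congrArg Subtype.val ((Finite.equivFin _).injective hab)

namespace SimpleGraph

variable {V : Type*} {G T : SimpleGraph V}

lemma rc_le_ncard_sdiff_add_one [Finite V] (S : Set (Sym2 V))
    (h : ∀ u w, ∃ p : G.Walk u w, p.IsPath ∧ {f | f ∈ p.edges ∧ f ∈ S}.Subsingleton) :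
    rc G ≤ (G.edgeSet \ S).ncard + 1 := by
  obtain ⟨c, hc⟩ := Set.exists_fin_collapsing_injOn G.edgeSet S
  refine Nat.sInf_le ⟨c, fun u w => ?_⟩
  obtain ⟨p, hp, hpS⟩ := h u w
  refine ⟨p, hp, hp.isTrail.edges_nodup.map_on fun f hf g hg hfg => ?_⟩
  rcases hc f (p.edges_subset_edgeSet hf) g (p.edges_subset_edgeSet hg) hfg with h | ⟨hfS, hgS⟩
  · exact h
  · exact hpS ⟨hf, hfS⟩ ⟨hg, hgS⟩

lemma Connected.exists_isTree_deleteEdges [Finite V] (hG : G.Connected)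
    (hcard : Nat.card G.edgeSet = Nat.card V) :
    ∃ x v, G.Adj x v ∧ (G.deleteEdges {s(x, v)}).IsTree := by
  have hcyc : ¬ G.IsAcyclic := fun h => by
    have := (isTree_iff_connected_and_card.1 ⟨hG, h⟩).2
    omega
  obtain ⟨x, v, hxv, hbr⟩ : ∃ x v, G.Adj x v ∧ ¬ G.IsBridge s(x, v) := by
    simpa [isAcyclic_iff_forall_adj_isBridge] using hcyc
  refine ⟨x, v, hxv, isTree_iff_connected_and_card.2
    ⟨hG.connected_delete_edge_of_not_isBridge hbr, ?_⟩⟩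
  have hpos : 0 < G.edgeSet.ncard := (Set.ncard_pos).2 ⟨s(x, v), hxv⟩
  rw [Nat.card_coe_set_eq] at hcard
  rw [edgeSet_deleteEdges, Nat.card_coe_set_eq,
    Set.ncard_sdiff_singleton_of_mem (G.mem_edgeSet.2 hxv)]
  omega

namespace Walk

variable {u v w x : V}

lemma exists_append_append_of_mem_support {p : G.Walk u w} (hx : x ∈ p.support)
    (hv : v ∈ p.support) :
    (∃ (r : G.Walk u x) (m : G.Walk x v) (s : G.Walk v w), p = r.append (m.append s)) ∨
      ∃ (r : G.Walk u v) (m : G.Walk v x) (s : G.Walk x w), p = r.append (m.append s) := by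
  obtain ⟨r, s, rfl⟩ := mem_support_iff_exists_append.1 hx
  rcases (mem_support_append_iff _ _).1 hv with hv | hv
  · obtain ⟨r', m, rfl⟩ := mem_support_iff_exists_append.1 hv
    exact .inr ⟨r', m, s, (append_assoc _ _ _).symm⟩
  · obtain ⟨m, s', rfl⟩ := mem_support_iff_exists_append.1 hv
    exact .inl ⟨r, m, s', rfl⟩

lemma exists_isPath_shortcut (hle : T ≤ G) {a b : V} (hab : G.Adj a b) (r : T.Walk u a)
    (m : T.Walk a b) (s : T.Walk b w) (hp : (r.append (m.append s)).IsTrail) :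
    ∃ P : G.Walk u w, P.IsPath ∧ ∀ f ∈ P.edges, f = s(a, b) ∨ f ∉ m.edges := by
  classical
  refine ⟨((r.mapLe hle).append (cons hab (s.mapLe hle))).bypass, bypass_isPath _,
    fun f hf => ?_⟩
  have hnd := hp.edges_nodup
  simp only [edges_append, List.nodup_append, List.mem_append] at hnd
  have := edges_bypass_subset_edges _ hf
  simp only [edges_append, edges_cons, edges_mapLe_eq_edges, List.mem_append,
    List.mem_cons] at this
  rcases this with hf | hf | hf
  · exact .inr fun hm => hnd.2.2 f hf f (.inl hm) rfl
  · exact .inl hf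
  · exact .inr fun hm => hnd.2.1.2.2 f hm f hf rfl

end Walk

lemma IsTree.exists_isPath_subsingleton_inter (hT : T.IsTree) (hle : T ≤ G) {x v y₁ y₂ : V}
    (hxv : G.Adj x v) (he : s(x, v) ∉ T.edgeSet) {q : T.Walk x v} (hq : q.IsPath)
    (h₁ : s(x, y₁) ∈ q.edges) (h₂ : s(y₂, v) ∈ q.edges) (u w : V) :
    ∃ P : G.Walk u w, P.IsPath ∧
      {f | f ∈ P.edges ∧ f ∈ ({s(x, v), s(x, y₁), s(y₂, v)} : Set (Sym2 V))}.Subsingleton := by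
  obtain ⟨p, hp⟩ := hT.connected.exists_isPath u w
  by_cases hboth : s(x, y₁) ∈ p.edges ∧ s(y₂, v) ∈ p.edges
  · obtain ⟨P, hP, hPe⟩ :
        ∃ P : G.Walk u w, P.IsPath ∧ ∀ f ∈ P.edges, f = s(x, v) ∨ f ∉ q.edges := by
      have hx := p.fst_mem_support_of_mem_edges hboth.1
      have hv := p.snd_mem_support_of_mem_edges hboth.2
      rcases Walk.exists_append_append_of_mem_support hx hv with ⟨r, m, s, rfl⟩ | ⟨r, m, s, rfl⟩
      · have hm : m = q := (hT.existsUnique_path x v).unique hp.of_append_right.of_append_left hq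
        subst hm
        exact Walk.exists_isPath_shortcut hle hxv r m s hp.isTrail
      · have hm : m.reverse = q :=
          (hT.existsUnique_path x v).unique hp.of_append_right.of_append_left.reverse hq
        subst hm
        obtain ⟨P, hP, hPe⟩ := Walk.exists_isPath_shortcut hle hxv.symm r m s hp.isTrail
        refine ⟨P, hP, fun f hf => ?_⟩
        simpa [Sym2.eq_swap] using hPe f hf
    refine ⟨P, hP, Set.subsingleton_of_subset_singleton (a := s(x, v)) fun f ⟨hf, hfS⟩ => ?_⟩
    rcases hPe f hf with rfl | hfq
    · rfl
    · simp only [Set.mem_insert_iff, Set.mem_singleton_iff] at hfS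
      rcases hfS with rfl | rfl | rfl <;> simp_all
  · refine ⟨p.mapLe hle, hp.mapLe hle, fun f ⟨hf, hfS⟩ g ⟨hg, hgS⟩ => ?_⟩
    rw [Walk.edges_mapLe_eq_edges] at hf hg
    have hfT := p.edges_subset_edgeSet hf
    have hgT := p.edges_subset_edgeSet hg
    simp only [Set.mem_insert_iff, Set.mem_singleton_iff] at hfS hgS
    rcases hfS with rfl | rfl | rfl <;> rcases hgS with rfl | rfl | rfl <;> simp_all

lemma rc_le_ncard_edgeSet_sub_two [Finite V] {x v : V} (hxv : G.Adj x v)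
    (hT : (G.deleteEdges {s(x, v)}).IsTree) : rc G ≤ G.edgeSet.ncard - 2 := by
  set T := G.deleteEdges {s(x, v)}
  have he : s(x, v) ∉ T.edgeSet := by simp [T]
  obtain ⟨q, hq⟩ := hT.connected.exists_isPath x v
  have hq_nil : ¬ q.Nil := Walk.not_nil_of_ne hxv.ne
  have h₁ := q.mk_start_snd_mem_edges hq_nil
  have h₂ := q.mk_penultimate_end_mem_edges hq_nil
  have hT₁ : s(x, q.snd) ∈ G.edgeSet \ {s(x, v)} := by
    simpa [T] using q.edges_subset_edgeSet h₁
  have hT₂ : s(q.penultimate, v) ∈ G.edgeSet \ {s(x, v)} := by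
    simpa [T] using q.edges_subset_edgeSet h₂
  have h₁₂ : s(x, q.snd) ≠ s(q.penultimate, v) := by
    intro h
    rcases Sym2.eq_iff.1 h with ⟨-, hv⟩ | ⟨hx, -⟩
    · exact hT₁.2 (by rw [hv]; rfl)
    · exact hxv.ne hx
  have hsub : ({s(x, v), s(x, q.snd), s(q.penultimate, v)} : Set (Sym2 V)) ⊆ G.edgeSet := by
    simp [Set.insert_subset_iff, hxv, hT₁.1, hT₂.1]
  have hS : ({s(x, v), s(x, q.snd), s(q.penultimate, v)} : Set (Sym2 V)).ncard = 3 :=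
    Set.ncard_eq_three.2 ⟨_, _, _, Ne.symm hT₁.2, Ne.symm hT₂.2, h₁₂, rfl⟩
  have h₃ : 3 ≤ G.edgeSet.ncard := hS ▸ Set.ncard_le_ncard hsub
  calc rc G ≤ (G.edgeSet \ {s(x, v), s(x, q.snd), s(q.penultimate, v)}).ncard + 1 :=
        rc_le_ncard_sdiff_add_one _
          (hT.exists_isPath_subsingleton_inter (deleteEdges_le _) hxv he hq h₁ h₂)
    _ = G.edgeSet.ncard - 2 := by
      rw [Set.ncard_sdiff hsub, hS]
      omega

end SimpleGraph

theorem rc_unicyclic_le_general {V : Type*} [Fintype V] (G' : SimpleGraph V)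
    [DecidableRel G'.Adj] (n : ℕ)
    (hcard : Fintype.card V = n) (hedges : G'.edgeFinset.card = n)
    (hconn : G'.Connected) :
    rc G' ≤ n - 2 := by
  have hE : G'.edgeSet.ncard = n := by
    rw [← Nat.card_coe_set_eq, Nat.card_eq_fintype_card, ← edgeFinset_card, hedges]
  have hEV : Nat.card G'.edgeSet = Nat.card V := by
    rw [Nat.card_coe_set_eq, hE, Nat.card_eq_fintype_card, hcard]
  obtain ⟨x, v, hxv, hT⟩ := hconn.exists_isTree_deleteEdges hEV
  exact hE ▸ rc_le_ncard_edgeSet_sub_two hxv hT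

/-- A connected unicyclic graph on `n ≥ 3` vertices (`n` vertices and `n`
edges) has rainbow connection number at most `n − 2`. -/
theorem rc_unicyclic_le {V : Type*} [Fintype V] (G' : SimpleGraph V)
    [DecidableRel G'.Adj] (n : ℕ) (hn : 3 ≤ n)
    (hcard : Fintype.card V = n) (hedges : G'.edgeFinset.card = n)
    (hconn : G'.Connected) :
    rc G' ≤ n - 2 :=
  rc_unicyclic_le_general G' n hcard hedges hconn
end

section
/- Fix integers t ≥ 2 and s ≥ 1. Let G be the graph constructed as follows: take a path P_{2t} = v_1 v_2 ⋯ v_{2t} on 2t vertices, and take t pairwise disjoint complete graphs G_1, G_2, …, G_t (also disjoint from the path) with |G_1| = 2 and |G_i| = s for 2 ≤ i ≤ t; for each 1 ≤ i ≤ t, join every vertex of G_i to both v_{2i−1} and v_{2i}. Then G is connected, rc(G) = 2t − 1, α(G) = t, and the diameter of G equals 2t − 1 (so rc(G) = 2α(G) − 1 = diam(G)). -/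
/-
Colour the path edge `v_j v_{j+1}` with `j`, the edges from `G_i` to `v_{2i−1}` with `2i − 1`,
those from `G_i` to `v_{2i}` with a colour below `2i`, and the edges inside the `G_i` with `1`.
If `x` is attached to the path no further right than `y` is attached on the left, there is a
walk from `x` to `y` whose colours increase strictly, hence a rainbow path; any other two
vertices lie in the same `G_i` and are adjacent. This gives `rc(G) ≤ 2t − 1`. Conversely, the
index of the leftmost path vertex to which a vertex is attached changes by at most one along an
edge, so `d(v_1, v_{2t}) ≥ 2t − 1`, and `2t − 1 ≤ diam(G) ≤ rc(G)`. Finally, the vertex set is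
covered by the `t` cliques `{v_{2i−1}, v_{2i}} ∪ G_i`, while `v_1, v_3, …, v_{2t−1}` are
independent.
-/

open SimpleGraph

/-- Example 1: a path `v_1 v_2 ⋯ v_{2t}` (here indexed zero-based by
`Fin (2t)`, so `v_{j+1}` is `j : Fin (2t)`) together with `t` disjoint
complete graphs `G_1, …, G_t` (indexed zero-based by `i : Fin t`, so `G_{i+1}`
has vertex set `Fin (if (i : ℕ) = 0 then 2 else s)`, of size 2 for `G_1` and
`s` otherwise); every vertex of `G_{i+1}` is joined to `v_{2i+1}` and
`v_{2i+2}`, i.e. to the path vertices with zero-based indices `2i` and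
`2i + 1`. -/
def exampleOne (t s : ℕ) :
    SimpleGraph (Fin (2 * t) ⊕ Σ i : Fin t, Fin (if (i : ℕ) = 0 then 2 else s)) where
  Adj x y :=
    match x, y with
    | Sum.inl a, Sum.inl b => (a : ℕ) + 1 = (b : ℕ) ∨ (b : ℕ) + 1 = (a : ℕ)
    | Sum.inl a, Sum.inr p => (a : ℕ) = 2 * (p.1 : ℕ) ∨ (a : ℕ) = 2 * (p.1 : ℕ) + 1
    | Sum.inr p, Sum.inl a => (a : ℕ) = 2 * (p.1 : ℕ) ∨ (a : ℕ) = 2 * (p.1 : ℕ) + 1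
    | Sum.inr p, Sum.inr q => p ≠ q ∧ p.1 = q.1
  symm := by
    constructor
    rintro (a | p) (b | q) h
    · exact h.symm
    · exact h
    · exact h
    · exact ⟨h.1.symm, h.2.symm⟩
  loopless := by
    constructor
    rintro (a | p) h
    · omega
    · exact h.1 rfl

open Sum

namespace SimpleGraph

variable {V : Type*} {G : SimpleGraph V}

theorem IsIndepSet.card_le_of_isClique_fiber {W : Type*} [Fintype W] (g : V → W)
    (hg : ∀ w, G.IsClique (g ⁻¹' {w})) {s : Finset V} (hs : G.IsIndepSet ↑s) :
    s.card ≤ Fintype.card W := by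
  refine Finset.card_le_card_of_injOn g (fun _ _ => Finset.mem_coe.mpr (Finset.mem_univ _)) ?_
  intro x hx y hy hxy
  by_contra hne
  exact hs hx hy hne (hg (g y) (by simpa using hxy) rfl hne)

end SimpleGraph

section Rainbow

variable {V : Type*} {G : SimpleGraph V} {k : ℕ} {c : Sym2 V → Fin k}

theorem RainbowConnectedWith.rc_le (h : RainbowConnectedWith G c) : rc G ≤ k :=
  Nat.sInf_le ⟨c, h⟩

theorem RainbowConnectedWith.connected [Nonempty V] (h : RainbowConnectedWith G c) :
    G.Connected :=
  (connected_iff G).mpr ⟨fun u v => (h u v).elim fun p _ => ⟨p⟩, ‹_›⟩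

theorem RainbowConnectedWith.dist_le (h : RainbowConnectedWith G c) (u v : V) :
    G.dist u v ≤ k := by
  obtain ⟨p, -, hp⟩ := h u v
  calc G.dist u v ≤ p.length := SimpleGraph.dist_le p
    _ = (p.edges.map c).length := by simp
    _ ≤ k := by simpa using hp.length_le_card

theorem RainbowConnectedWith.diam_le_rc (h : RainbowConnectedWith G c) : G.diam ≤ rc G := by
  obtain ⟨c', hc'⟩ : ∃ c' : Sym2 V → Fin (rc G), RainbowConnectedWith G c' :=
    Nat.sInf_mem (s := {k | ∃ c : Sym2 V → Fin k, RainbowConnectedWith G c}) ⟨k, c, h⟩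
  cases isEmpty_or_nonempty V
  · simp [diam, ediam]
  · obtain ⟨u, v, huv⟩ := G.exists_dist_eq_diam
    exact huv ▸ hc'.dist_le u v

/-- The bypass of a walk is a path using only edges of the walk, so it stays rainbow. -/
theorem rainbowConnectedWith_of_walks (f : Sym2 V → ℕ) (hcf : ∀ e ∈ G.edgeSet, (c e : ℕ) = f e)
    (h : ∀ u v, ∃ p : G.Walk u v, (p.edges.map f).Nodup) : RainbowConnectedWith G c := by
  classical
  intro u v
  obtain ⟨p, hp⟩ := h u v
  have hmap : (p.edges.map c).map Fin.val = p.edges.map f := by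
    rw [List.map_map]
    exact List.map_congr_left fun e he => hcf e (p.edges_subset_edgeSet he)
  have hc : (p.edges.map c).Nodup := (hmap ▸ hp).of_map _
  exact ⟨p.bypass, p.bypass_isPath, p.bypass_isPath.isTrail.edges_nodup.map_on
    fun _ hx _ hy => List.inj_on_of_nodup_map hc (p.edges_bypass_subset_edges hx)
      (p.edges_bypass_subset_edges hy)⟩

theorem indepNum_eq_of_isIndepSet {n : ℕ} (s : Finset V) (hs : G.IsIndepSet ↑s) (hcard : s.card = n)
    (hle : ∀ s : Finset V, G.IsIndepSet ↑s → s.card ≤ n) : _root_.indepNum G = n := by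
  have hbdd : ∀ m ∈ {m | ∃ s : Finset V, s.card = m ∧ G.IsIndepSet ↑s}, m ≤ n := by
    rintro _ ⟨s, rfl, hs⟩
    exact hle s hs
  exact le_antisymm (csSup_le ⟨n, s, hcard, hs⟩ hbdd) (le_csSup ⟨n, hbdd⟩ ⟨s, hcard, hs⟩)

end Rainbow

namespace exampleOne

abbrev Vertex (t s : ℕ) := Fin (2 * t) ⊕ Σ i : Fin t, Fin (if (i : ℕ) = 0 then 2 else s)

variable {t s : ℕ}

@[simp]
theorem adj_inl_inl {a b : Fin (2 * t)} :
    (exampleOne t s).Adj (inl a) (inl b) ↔ (a : ℕ) + 1 = b ∨ (b : ℕ) + 1 = a :=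
  Iff.rfl

@[simp]
theorem adj_inl_inr {a : Fin (2 * t)} {p : Σ i : Fin t, Fin (if (i : ℕ) = 0 then 2 else s)} :
    (exampleOne t s).Adj (inl a) (inr p) ↔ (a : ℕ) = 2 * p.1 ∨ (a : ℕ) = 2 * p.1 + 1 :=
  Iff.rfl

@[simp]
theorem adj_inr_inl {a : Fin (2 * t)} {p : Σ i : Fin t, Fin (if (i : ℕ) = 0 then 2 else s)} :
    (exampleOne t s).Adj (inr p) (inl a) ↔ (a : ℕ) = 2 * p.1 ∨ (a : ℕ) = 2 * p.1 + 1 :=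
  Iff.rfl

@[simp]
theorem adj_inr_inr {p q : Σ i : Fin t, Fin (if (i : ℕ) = 0 then 2 else s)} :
    (exampleOne t s).Adj (inr p) (inr q) ↔ p ≠ q ∧ p.1 = q.1 :=
  Iff.rfl

/-- The zero-based indices of the leftmost and rightmost path vertices a vertex is attached to
(the vertex itself for a path vertex). -/
def pathLeft : Vertex t s → ℕ
  | inl a => a
  | inr p => 2 * p.1

def pathRight : Vertex t s → ℕ
  | inl a => a
  | inr p => 2 * p.1 + 1

def colour : Vertex t s → Vertex t s → ℕ
  | inl a, inl b => min a b
  | inl a, inr p | inr p, inl a => if (a : ℕ) = 2 * p.1 then 2 * p.1 else 2 * p.1 - 1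
  | inr _, inr _ => 0

def edgeColour : Sym2 (Vertex t s) → ℕ :=
  Sym2.lift ⟨colour, by rintro (a | p) (b | q) <;> simp [colour, min_comm]⟩

def colouring (ht : 0 < t) (e : Sym2 (Vertex t s)) : Fin (2 * t - 1) :=
  ⟨edgeColour e % (2 * t - 1), Nat.mod_lt _ (by omega)⟩

theorem colour_lt_of_adj {x y : Vertex t s} (h : (exampleOne t s).Adj x y) :
    colour x y < 2 * t - 1 := by
  rcases x with a | p <;> rcases y with b | q
  · simp only [adj_inl_inl] at h
    simp only [colour]
    omega
  · have := q.1.isLt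
    simp only [colour]
    split_ifs <;> omega
  · have := p.1.isLt
    simp only [colour]
    split_ifs <;> omega
  · have := p.1.isLt
    simp only [colour]
    omega

theorem edgeColour_mk (x y : Vertex t s) : edgeColour s(x, y) = colour x y := rfl

theorem colouring_eq (ht : 0 < t) {e : Sym2 (Vertex t s)} (he : e ∈ (exampleOne t s).edgeSet) :
    (colouring ht e : ℕ) = edgeColour e := by
  induction e using Sym2.ind with
  | h x y => exact Nat.mod_eq_of_lt (colour_lt_of_adj he)

theorem exists_walk_inl_inl {a b : Fin (2 * t)} (hab : (a : ℕ) ≤ b) :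
    ∃ p : (exampleOne t s).Walk (inl a) (inl b),
      p.edges.map edgeColour = List.range' a (b - a) := by
  obtain ⟨n, hn⟩ : ∃ n, (b : ℕ) = a + n := ⟨b - a, by omega⟩
  rw [show (b : ℕ) - a = n by omega]
  induction n generalizing b with
  | zero =>
    obtain rfl : b = a := Fin.ext hn
    exact ⟨.nil, rfl⟩
  | succ n ih =>
    obtain ⟨p, hp⟩ := ih (b := ⟨a + n, by omega⟩) (by simp) rfl
    refine ⟨p.concat (adj_inl_inl.mpr (Or.inl hn.symm)), ?_⟩
    rw [Walk.edges_concat, List.concat_eq_append, List.map_append, hp, List.range'_concat]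
    simp only [List.map_cons, edgeColour_mk, colour, List.map_nil, one_mul,
      List.append_cancel_left_eq, List.cons.injEq, inf_eq_left, and_true]
    omega

theorem exists_walk_to_inl (x : Vertex t s) (b : Fin (2 * t)) (hxb : pathRight x ≤ b) :
    ∃ p : (exampleOne t s).Walk x (inl b),
      (p.edges.map edgeColour).Nodup ∧ ∀ c ∈ p.edges.map edgeColour, c < b := by
  rcases x with a | q
  · obtain ⟨p, hp⟩ := exists_walk_inl_inl (s := s) hxb
    refine ⟨p, hp ▸ List.nodup_range' .., ?_⟩
    simp only [hp, List.mem_range'_1]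
    omega
  · simp only [pathRight] at hxb
    obtain ⟨p, hp⟩ := exists_walk_inl_inl (s := s) (a := ⟨2 * q.1 + 1, by omega⟩) hxb
    refine ⟨p.cons (adj_inr_inl.mpr (Or.inr rfl)), ?_⟩
    simp only [Walk.edges_cons, List.map_cons, hp, edgeColour_mk, colour, Nat.succ_ne_self,
      if_false, List.nodup_cons, List.mem_cons, List.mem_range'_1]
    exact ⟨⟨by omega, List.nodup_range' ..⟩, by omega⟩

theorem exists_rainbow_walk_of_pathRight_le {x y : Vertex t s} (h : pathRight x ≤ pathLeft y) :
    ∃ p : (exampleOne t s).Walk x y, (p.edges.map edgeColour).Nodup := by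
  rcases y with b | q
  · obtain ⟨p, hp, -⟩ := exists_walk_to_inl x b h
    exact ⟨p, hp⟩
  · obtain ⟨p, hp, hlt⟩ := exists_walk_to_inl x ⟨2 * q.1, by omega⟩ h
    refine ⟨p.concat (adj_inl_inr.mpr (Or.inl rfl)), ?_⟩
    rw [Walk.edges_concat, List.concat_eq_append, List.map_append, List.nodup_append]
    refine ⟨hp, List.nodup_singleton _, fun c hc d hd => ?_⟩
    simp only [List.map_cons, List.map_nil, List.mem_singleton, edgeColour_mk, colour,
      if_true] at hd
    exact hd ▸ (hlt c hc).ne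

theorem exists_rainbow_walk (x y : Vertex t s) :
    ∃ p : (exampleOne t s).Walk x y, (p.edges.map edgeColour).Nodup := by
  by_cases hxy : pathRight x ≤ pathLeft y
  · exact exists_rainbow_walk_of_pathRight_le hxy
  by_cases hyx : pathRight y ≤ pathLeft x
  · obtain ⟨p, hp⟩ := exists_rainbow_walk_of_pathRight_le hyx
    exact ⟨p.reverse, by simpa [Walk.edges_reverse] using hp⟩
  rcases x with a | p <;> rcases y with b | q <;> simp only [pathLeft, pathRight] at hxy hyx
  · omega
  · omega
  · omega
  obtain rfl | hne := eq_or_ne p q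
  · exact ⟨.nil, List.nodup_nil⟩
  · exact ⟨.cons (adj_inr_inr.mpr ⟨hne, Fin.ext (by omega)⟩) .nil, by simp⟩

theorem rainbowConnectedWith_colouring (ht : 0 < t) :
    RainbowConnectedWith (exampleOne t s) (colouring ht) :=
  rainbowConnectedWith_of_walks edgeColour (fun _ he => colouring_eq ht he) exists_rainbow_walk

theorem pathLeft_le_of_adj {x y : Vertex t s} (h : (exampleOne t s).Adj x y) :
    pathLeft y ≤ pathLeft x + 1 := by
  rcases x with a | p <;> rcases y with b | q <;> simp only [pathLeft] <;>
    simp only [adj_inl_inl, adj_inl_inr, adj_inr_inl, adj_inr_inr] at h <;> omega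

theorem pathLeft_le_add_length {x y : Vertex t s} (p : (exampleOne t s).Walk x y) :
    pathLeft y ≤ pathLeft x + p.length := by
  induction p with
  | nil => simp
  | cons h p ih =>
    rw [Walk.length_cons]
    have := pathLeft_le_of_adj h
    omega

theorem two_mul_sub_one_le_dist_ends (ht : 0 < t) :
    2 * t - 1 ≤ (exampleOne t s).dist (inl ⟨0, by omega⟩) (inl ⟨2 * t - 1, by omega⟩) := by
  have : Nonempty (Vertex t s) := ⟨inl ⟨0, by omega⟩⟩
  obtain ⟨p, hp⟩ := (rainbowConnectedWith_colouring (s := s) ht).connected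
    |>.exists_walk_length_eq_dist (inl ⟨0, by omega⟩) (inl ⟨2 * t - 1, by omega⟩)
  simpa [pathLeft, hp] using pathLeft_le_add_length p

def block : Vertex t s → Fin t
  | inl a => ⟨a / 2, by omega⟩
  | inr p => p.1

theorem isClique_block_fiber (i : Fin t) : (exampleOne t s).IsClique (block ⁻¹' {i}) := by
  rintro (a | p) rfl (b | q) hb hne <;>
    simp only [Set.mem_preimage, Set.mem_singleton_iff, block, Fin.ext_iff] at hb ⊢
  · have : (a : ℕ) ≠ b := fun h => hne (congrArg inl (Fin.ext h))
    simp only [adj_inl_inl]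
    omega
  · simp only [adj_inl_inr]
    omega
  · simp only [adj_inr_inl]
    omega
  · exact adj_inr_inr.mpr ⟨fun h => hne (congrArg inr h), Fin.ext hb.symm⟩

def evenPathVertex (i : Fin t) : Vertex t s := inl ⟨2 * i, by omega⟩

theorem evenPathVertex_injective : Function.Injective (evenPathVertex (s := s) (t := t)) :=
  fun i j h => Fin.ext (by simpa [evenPathVertex] using h)

def evenPathVertices (t s : ℕ) : Finset (Vertex t s) :=
  Finset.univ.map ⟨evenPathVertex, evenPathVertex_injective⟩

theorem isIndepSet_evenPathVertices : (exampleOne t s).IsIndepSet ↑(evenPathVertices t s) := by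
  intro x hx y hy hne
  obtain ⟨i, -, rfl⟩ := Finset.mem_map.mp hx
  obtain ⟨j, -, rfl⟩ := Finset.mem_map.mp hy
  have : (i : ℕ) ≠ j := fun h => hne (by simp [Fin.ext h])
  simp only [Function.Embedding.coeFn_mk, evenPathVertex, adj_inl_inl]
  omega

theorem indepNum_eq : _root_.indepNum (exampleOne t s) = t :=
  indepNum_eq_of_isIndepSet (evenPathVertices t s) isIndepSet_evenPathVertices
    (by simp [evenPathVertices])
    fun _ hs => (hs.card_le_of_isClique_fiber block isClique_block_fiber).trans_eq
      (Fintype.card_fin t)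

end exampleOne

theorem exampleOne_props_general (t s : ℕ) (ht : 2 ≤ t) :
    (exampleOne t s).Connected ∧
    rc (exampleOne t s) = 2 * t - 1 ∧
    _root_.indepNum (exampleOne t s) = t ∧
    (exampleOne t s).diam = 2 * t - 1 := by
  have ht₀ : 0 < t := by omega
  have : Nonempty (exampleOne.Vertex t s) := ⟨inl ⟨0, by omega⟩⟩
  have hcol := exampleOne.rainbowConnectedWith_colouring (s := s) ht₀
  have hconn := hcol.connected
  have hrc_le : rc (exampleOne t s) ≤ 2 * t - 1 := hcol.rc_le
  have hdiam_le : (exampleOne t s).diam ≤ rc (exampleOne t s) := hcol.diam_le_rc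
  have hle_diam : 2 * t - 1 ≤ (exampleOne t s).diam :=
    (exampleOne.two_mul_sub_one_le_dist_ends ht₀).trans
      (dist_le_diam (connected_iff_ediam_ne_top.mp hconn))
  exact ⟨hconn, by omega, exampleOne.indepNum_eq, by omega⟩

/-- For `t ≥ 2` and `s ≥ 1`, the graph of Example 1 is connected and satisfies
`rc(G) = 2t − 1`, `α(G) = t` and `diam(G) = 2t − 1`. -/
theorem exampleOne_props (t s : ℕ) (ht : 2 ≤ t) (hs : 1 ≤ s) :
    (exampleOne t s).Connected ∧
    rc (exampleOne t s) = 2 * t - 1 ∧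
    _root_.indepNum (exampleOne t s) = t ∧
    (exampleOne t s).diam = 2 * t - 1 :=
  exampleOne_props_general t s ht
end
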